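/- arXiv:2412.08826 — 4 statements merged into one kernel-verified Lean document; each statement's English description precedes it below -/
import Mathlib

section
/- Let R be a commutative ring and let L be a Lie algebra over R that is finitely generated as an R-module. Assume that for every maximal ideal m of R, the fiber L/mL, viewed as a Lie algebra over the residue field R/m, is a simple Lie algebra. Then L equals its derived ideal, i.e. ⁅L, L⁆ = L; equivalently, L is generated as an R-module by the brackets ⁅x, y⁆ of pairs of its elements. -/
/-- The Lie ideal `m • L` of a Lie algebra `L` over `R`, for an ideal `m` of `R`. -/
def smulTopLieIdeal (R L : Type*) [CommRing R] [LieRing L] [LieAlgebra R L]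
    (m : Ideal R) : LieIdeal R L :=
  { m • (⊤ : Submodule R L) with
    lie_mem := by
      intro x y hy
      refine Submodule.smul_induction_on hy (fun r hr z _ => ?_) (fun a b ha hb => ?_)
      · rw [lie_smul]
        exact Submodule.smul_mem_smul hr Submodule.mem_top
      · rw [lie_add]
        exact Submodule.add_mem _ ha hb }

lemma derived_sup_smul_eq_top {R L : Type*} [CommRing R] [LieRing L] [LieAlgebra R L]
    (m : Ideal R) (h : LieAlgebra.IsSimple R (L ⧸ smulTopLieIdeal R L m)) :
    ((⁅(⊤ : LieIdeal R L), (⊤ : LieIdeal R L)⁆ : LieIdeal R L) : Submodule R L)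
      ⊔ (smulTopLieIdeal R L m : Submodule R L) = ⊤ := by
  set I := smulTopLieIdeal R L m with hI
  let π : L →ₗ⁅R⁆ L ⧸ I :=
    { toLinearMap := (I : Submodule R L).mkQ
      map_lie' := fun {x y} => rfl }
  have hπ : Function.Surjective π := Submodule.mkQ_surjective _
  have htop : LieIdeal.map π ⊤ = ⊤ := by
    rw [← LieSubmodule.toSubmodule_inj, LieIdeal.coe_map_of_surjective hπ,
      LieSubmodule.top_toSubmodule, LieSubmodule.top_toSubmodule, Submodule.map_top,
      LinearMap.range_eq_top]
    exact hπ
  have hder : LieIdeal.map π ⁅(⊤ : LieIdeal R L), (⊤ : LieIdeal R L)⁆ = ⊤ := by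
    rw [LieIdeal.map_bracket_eq π hπ, htop]
    rcases h.eq_bot_or_eq_top ⁅(⊤ : LieIdeal R (L ⧸ I)), ⊤⁆ with hb | ht
    · exfalso
      apply h.non_abelian
      constructor
      intro x y
      have hmem : ⁅x, y⁆ ∈ (⁅(⊤ : LieIdeal R (L ⧸ I)), (⊤ : LieIdeal R (L ⧸ I))⁆ :
          LieIdeal R (L ⧸ I)) :=
        LieSubmodule.lie_mem_lie trivial trivial
      rw [hb] at hmem
      simpa using hmem
    · exact ht
  have hmap : Submodule.map (I : Submodule R L).mkQ
      ((⁅(⊤ : LieIdeal R L), (⊤ : LieIdeal R L)⁆ : LieIdeal R L) : Submodule R L) = ⊤ := by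
    have := congrArg LieSubmodule.toSubmodule hder
    rwa [LieIdeal.coe_map_of_surjective hπ, LieSubmodule.top_toSubmodule] at this
  rw [Submodule.map_mkQ_eq_top] at hmap
  rw [sup_comm]
  exact hmap

/-- If `L` is a finitely generated Lie algebra over a commutative ring `R` such that for every
maximal ideal `m` of `R` the fiber `L/mL` is a simple Lie algebra (over the residue field `R/m`;
equivalently over `R`, since the Lie ideals and the vanishing of the bracket are the same),
then `⁅L, L⁆ = L`. -/
theorem derived_eq_top_of_fibers_simple
    {R L : Type*} [CommRing R] [LieRing L] [LieAlgebra R L] [Module.Finite R L]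
    (h : ∀ m : Ideal R, m.IsMaximal →
      LieAlgebra.IsSimple R (L ⧸ smulTopLieIdeal R L m)) :
    ⁅(⊤ : LieIdeal R L), (⊤ : LieIdeal R L)⁆ = ⊤ := by
  by_contra hD
  have hDne : ((⁅(⊤ : LieIdeal R L), (⊤ : LieIdeal R L)⁆ : LieIdeal R L) : Submodule R L) ≠ ⊤ := by
    intro hc
    exact hD ((LieSubmodule.toSubmodule_eq_top (N := _)).mp hc)
  have hcoat : IsCoatomic (Submodule R L) :=
    CompleteLattice.coatomic_of_top_compact
      ((Submodule.fg_iff_compact _).mp (Module.finite_def.mp ‹_›))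
  obtain ⟨P, hP, hDP⟩ := (hcoat.eq_top_or_exists_le_coatom _).resolve_left hDne
  have hsimple : IsSimpleModule R (L ⧸ P) := isSimpleModule_iff_isCoatom.mpr hP
  set m : Ideal R := Module.annihilator R (L ⧸ P) with hm
  have hmax : m.IsMaximal := IsSimpleModule.annihilator_isMaximal
  have hsmul : (smulTopLieIdeal R L m : Submodule R L) ≤ P := by
    show m • (⊤ : Submodule R L) ≤ P
    rw [Submodule.smul_le]
    intro r hr x _
    have : r • P.mkQ x = 0 := Module.mem_annihilator.mp hr _
    rw [← map_smul] at this
    exact (Submodule.Quotient.mk_eq_zero P).mp this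
  have hkey := derived_sup_smul_eq_top m (h m hmax)
  have : (⊤ : Submodule R L) ≤ P := hkey ▸ sup_le hDP hsmul
  exact hP.1 (top_le_iff.mp this)
end

section
/- Let R be a commutative ring and let L be a Lie algebra over R that is finitely generated as an R-module. Assume that for every maximal ideal m of R, the fiber L/mL is a perfect Lie algebra over R/m, i.e. ⁅L/mL, L/mL⁆ = L/mL. Then L itself is perfect: ⁅L, L⁆ = L. -/
section
variable {R L : Type*} [CommRing R] [LieRing L] [LieAlgebra R L]

/-- The quotient map `L → L ⧸ I` as a Lie algebra homomorphism. -/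
def lieQuotHom (I : LieIdeal R L) : L →ₗ⁅R⁆ L ⧸ I :=
  { (I : LieSubmodule R L L).toSubmodule.mkQ with
    map_lie' := fun {_ _} => rfl }

theorem lieQuotHom_surjective (I : LieIdeal R L) : Function.Surjective (lieQuotHom I) :=
  Submodule.mkQ_surjective _

theorem lieQuotHom_toLinearMap (I : LieIdeal R L) :
    (lieQuotHom I : L →ₗ[R] L ⧸ I) = (I : LieSubmodule R L L).toSubmodule.mkQ := rfl

end

/-- If `L` is a finitely generated Lie algebra over a commutative ring `R` such that for every
maximal ideal `m` of `R` the fiber `L/mL` is a perfect Lie algebra, then `L` is perfect: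
`⁅L, L⁆ = L`. -/
theorem perfect_of_fibers_perfect
    {R L : Type*} [CommRing R] [LieRing L] [LieAlgebra R L] [Module.Finite R L]
    (h : ∀ m : Ideal R, m.IsMaximal →
      ⁅(⊤ : LieIdeal R (L ⧸ smulTopLieIdeal R L m)),
        (⊤ : LieIdeal R (L ⧸ smulTopLieIdeal R L m))⁆ = ⊤) :
    ⁅(⊤ : LieIdeal R L), (⊤ : LieIdeal R L)⁆ = ⊤ := by
  set D : Submodule R L := LieSubmodule.toSubmodule ⁅(⊤ : LieIdeal R L), (⊤ : LieIdeal R L)⁆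
    with hDdef
  suffices hD : D = ⊤ by
    rw [← LieSubmodule.toSubmodule_inj, ← hDdef, hD, LieSubmodule.top_toSubmodule]
  have key : ∀ m : Ideal R, m.IsMaximal → D ⊔ m • (⊤ : Submodule R L) = ⊤ := by
    intro m hm
    set I := smulTopLieIdeal R L m with hI
    have hsurj := lieQuotHom_surjective I
    have h1 : LieIdeal.map (lieQuotHom I) ⊤ = ⊤ := by
      rw [← LieHom.idealRange_eq_map]
      exact LieHom.idealRange_eq_top_of_surjective _ hsurj
    have h2 := LieIdeal.map_bracket_eq (f := lieQuotHom I) (I₁ := ⊤) (I₂ := ⊤) hsurj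
    rw [h1, h m hm] at h2
    have h3 := LieIdeal.coe_map_of_surjective (I := ⁅(⊤ : LieIdeal R L), (⊤ : LieIdeal R L)⁆) hsurj
    rw [h2, LieSubmodule.top_toSubmodule, lieQuotHom_toLinearMap] at h3
    have h4 : D.map ((I : LieSubmodule R L L).toSubmodule.mkQ) = ⊤ := h3.symm
    have h5 := (Submodule.map_mkQ_eq_top ((I : LieSubmodule R L L).toSubmodule) D).mp h4
    rw [sup_comm] at h5; simpa [hI, smulTopLieIdeal] using h5
  by_contra hne
  have hlt : D < ⊤ := lt_top_iff_ne_top.mpr hne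
  haveI : Nontrivial (L ⧸ D) := Submodule.Quotient.nontrivial_iff.mpr hlt.ne
  have hann : Module.annihilator R (L ⧸ D) ≠ ⊤ := by
    intro hEq
    have h1 : (1 : R) ∈ Module.annihilator R (L ⧸ D) := hEq ▸ Submodule.mem_top
    rw [Module.mem_annihilator] at h1
    obtain ⟨a, b, hab⟩ := exists_pair_ne (L ⧸ D)
    exact hab (by rw [← one_smul R a, ← one_smul R b, h1, h1])
  obtain ⟨m, hm, hle⟩ := Ideal.exists_le_maximal _ hann
  have htop : (⊤ : Submodule R (L ⧸ D)) ≤ m • ⊤ := by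
    have hk := congrArg (Submodule.map D.mkQ) (key m hm)
    rw [Submodule.map_sup, Submodule.map_smul'', Submodule.map_top, Submodule.range_mkQ,
      Submodule.mkQ_map_self, bot_sup_eq] at hk
    exact hk.ge
  obtain ⟨r, hr1, hr0⟩ := Submodule.exists_sub_one_mem_and_smul_eq_zero_of_fg_of_le_smul m
    (⊤ : Submodule R (L ⧸ D)) Module.Finite.fg_top htop
  have hrm : r ∈ m := hle (Module.mem_annihilator.mpr fun q => hr0 q Submodule.mem_top)
  have hone : (1 : R) ∈ m := by simpa using m.sub_mem hrm hr1
  exact hm.ne_top (m.eq_top_of_isUnit_mem hone isUnit_one)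
end

section
/- Let G be a group and let g, h ∈ G be elements of finite orders n = orderOf(g) and m = orderOf(h) with n and m coprime. Then: (i) the elements g^i · h^i for 0 ≤ i < n·m are pairwise distinct; and (ii) if every element of G can be written in the form g^a · h^b for some natural numbers a, b, then for every x ∈ G there exists a natural number i with x = g^i · h^i. -/
private lemma key_step {G : Type*} [Group G] (g h : G)
    (hco : Nat.Coprime (orderOf g) (orderOf h))
    {i j : ℕ} (hij : j ≤ i) (heq : g ^ i * h ^ i = g ^ j * h ^ j) :
    i ≡ j [MOD orderOf g * orderOf h] := by
  set d := i - j with hd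
  have h2 : g ^ d * h ^ i = h ^ j := by
    have h0 : g ^ j * (g ^ d * h ^ i) = g ^ j * h ^ j := by
      rw [← mul_assoc, ← pow_add, Nat.add_sub_cancel' hij]; exact heq
    exact mul_left_cancel h0
  have h1 : g ^ d = (h ^ d)⁻¹ := by
    rw [eq_inv_iff_mul_eq_one]
    have : g ^ d * h ^ d * h ^ j = h ^ j := by
      rw [mul_assoc, ← pow_add, Nat.sub_add_cancel hij]; exact h2
    exact mul_right_cancel (by rw [one_mul]; exact this)
  have hgd1 : g ^ d = 1 := by
    have o1 : orderOf (g ^ d) ∣ orderOf g := by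
      apply orderOf_dvd_of_pow_eq_one
      rw [← pow_mul, mul_comm, pow_mul, pow_orderOf_eq_one, one_pow]
    have o2 : orderOf (g ^ d) ∣ orderOf h := by
      apply orderOf_dvd_of_pow_eq_one
      rw [h1, inv_pow, ← pow_mul, mul_comm, pow_mul, pow_orderOf_eq_one, one_pow, inv_one]
    have : orderOf (g ^ d) ∣ 1 := hco ▸ Nat.dvd_gcd o1 o2
    rw [orderOf_eq_one_iff.mp (Nat.eq_one_of_dvd_one this)]
  have hhd1 : h ^ d = 1 := by
    have := h1; rw [hgd1, eq_comm, inv_eq_one] at this; exact this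
  have dg : orderOf g ∣ d := orderOf_dvd_of_pow_eq_one hgd1
  have dh : orderOf h ∣ d := orderOf_dvd_of_pow_eq_one hhd1
  have : orderOf g * orderOf h ∣ d := hco.mul_dvd_of_dvd_of_dvd dg dh
  exact ((Nat.modEq_iff_dvd' hij).mpr this).symm

/-- For elements `g, h` of a group with finite coprime orders `n = orderOf g` and
`m = orderOf h`: (i) the elements `g ^ i * h ^ i` for `0 ≤ i < n * m` are pairwise distinct,
and (ii) if every element of the group is of the form `g ^ a * h ^ b`, then every element is of
the form `g ^ i * h ^ i`. -/
theorem diagonal_powers_enumerate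
    {G : Type*} [Group G] (g h : G)
    (hg : orderOf g ≠ 0) (hh : orderOf h ≠ 0)
    (hco : Nat.Coprime (orderOf g) (orderOf h)) :
    (∀ i j : ℕ, i < orderOf g * orderOf h → j < orderOf g * orderOf h →
      g ^ i * h ^ i = g ^ j * h ^ j → i = j) ∧
    ((∀ x : G, ∃ a b : ℕ, x = g ^ a * h ^ b) → ∀ x : G, ∃ i : ℕ, x = g ^ i * h ^ i) := by
  constructor
  · intro i j hi hj heq
    rcases le_total j i with hij | hij
    · exact (Nat.ModEq.eq_of_lt_of_lt (key_step g h hco hij heq).symm hj hi).symm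
    · exact Nat.ModEq.eq_of_lt_of_lt (key_step g h hco hij heq.symm).symm hi hj
  · intro hsurj x
    obtain ⟨a, b, rfl⟩ := hsurj x
    obtain ⟨i, hia, hib⟩ := Nat.chineseRemainder hco a b
    refine ⟨i, ?_⟩
    have : g ^ a = g ^ (i : ℕ) := (pow_eq_pow_iff_modEq).mpr hia.symm
    have h2 : h ^ b = h ^ (i : ℕ) := (pow_eq_pow_iff_modEq).mpr hib.symm
    rw [this, h2]
end

section
/- Let σ, τ be transpositions and ρ a 3-cycle in Equiv.Perm (Fin 3) such that σ · τ · ρ = 1. Then there exists π ∈ Equiv.Perm (Fin 3) such that π σ π⁻¹ = Equiv.swap 0 1, π τ π⁻¹ = Equiv.swap 1 2, and π ρ π⁻¹ = (Equiv.swap 0 1 · Equiv.swap 1 2)⁻¹. -/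
/-- Two transpositions and a 3-cycle in `S₃` with product the identity can be simultaneously
conjugated to the standard data `((12), (23), (132))`. -/
theorem conj_to_standard_triple
    (σ τ ρ : Equiv.Perm (Fin 3))
    (hσ : σ.IsSwap) (hτ : τ.IsSwap) (hρ : ρ.IsThreeCycle)
    (hprod : σ * τ * ρ = 1) :
    ∃ π : Equiv.Perm (Fin 3),
      π * σ * π⁻¹ = Equiv.swap 0 1 ∧
      π * τ * π⁻¹ = Equiv.swap 1 2 ∧
      π * ρ * π⁻¹ = (Equiv.swap 0 1 * Equiv.swap (1 : Fin 3) 2)⁻¹ := by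
  have hρ' : ρ = (σ * τ)⁻¹ := (inv_eq_of_mul_eq_one_right hprod).symm
  have hne : σ ≠ τ := by
    rintro rfl
    obtain ⟨x, y, hxy, rfl⟩ := hσ
    have : ρ = 1 := by simp [hρ', Equiv.swap_mul_self]
    rw [this] at hρ
    exact three_ne_zero (by simp [Equiv.Perm.IsThreeCycle] at hρ)
  subst hρ'
  clear hρ hprod
  obtain ⟨a, b, hab, rfl⟩ := hσ
  obtain ⟨c, d, hcd, rfl⟩ := hτ
  revert hab hcd hne; revert a b c d; decide
end
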